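/- Fix λ > 0. For every real x < −λ²s, the one-sided limits f₊(x) := lim_{ε→0⁺} f(x+iε; λ) and f₋(x) := lim_{ε→0⁺} f(x−iε; λ) exist and satisfy f₊(x) − f₋(x) = |x|^{α} e^{2(−1)^{k+1} λ^{2k}/x^{k}} = |x|^{α} e^{−2λ^{2k}/|x|^{k}}. -/

import Mathlib

open Complex Set MeasureTheory Filter Topology

/-- The Cauchy-type integral
`f(z;λ) = (e^{−z}/(2πi)) ∫_{−∞}^{−λ²s} |x|^α e^x e^{2(−1)^{k+1} λ^{2k}/x^k} (x−z)^{−1} dx`. -/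
noncomputable def fFun (k : ℕ) (α s : ℝ) (lam : ℝ) (z : ℂ) : ℂ :=
  (Complex.exp (-z) / (2 * Real.pi * Complex.I)) *
    ∫ x in Iic (-(lam ^ 2 * s)),
      ((|x| ^ α : ℝ) : ℂ) * Complex.exp (x : ℂ) *
        Complex.exp (2 * (-1 : ℂ) ^ (k + 1) * ((lam ^ (2 * k) : ℝ) : ℂ) * (x : ℂ) ^ (-(k : ℤ)))
        / ((x : ℂ) - z)

/-!
Sokhotski–Plemelj: if `G` is integrable and Lipschitz at `x₀`, the Cauchy transform
`∫ G t / (t - z) dt` has boundary values `P ± π i G x₀` at `x₀` from above and below. Cutting out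
`(x₀ - δ, x₀ + δ]`, the far part and the near part `∫ (G t - G x₀) / (t - z)` have dominated
integrands and so are continuous up to the real axis, while the remainder
`G x₀ ∫ dt / (t - z) = G x₀ (log (δ - i y) - log (-δ - i y))` picks up `± π i G x₀` because
`-δ - i y` approaches the branch cut of `log` from opposite sides as `y → 0±`.
On `(-∞, -λ²s)` the integrand of `f` is `|t|^α e^t e^{-2λ^{2k}/|t|^k} / (t - z)`, smooth at `x < 0`,
so `f₊ - f₋ = e^{-x} · |x|^α e^x e^{-2λ^{2k}/|x|^k}`.
-/

open Asymptotics
open scoped Real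

noncomputable def cauchyTransform (G : ℝ → ℂ) (z : ℂ) : ℂ :=
  ∫ t, G t / ((t : ℂ) - z)

section CauchyTransform

variable {G : ℝ → ℂ} {z : ℂ}

lemma abs_im_le_norm_ofReal_sub (t : ℝ) (z : ℂ) : |z.im| ≤ ‖(t : ℂ) - z‖ := by
  simpa using abs_im_le_norm ((t : ℂ) - z)

lemma abs_sub_le_norm_ofReal_sub_add_mul_I (t x₀ y : ℝ) :
    |t - x₀| ≤ ‖(t : ℂ) - (x₀ + y * I)‖ := by
  simpa using abs_re_le_norm ((t : ℂ) - (x₀ + y * I))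

lemma ofReal_sub_ne_zero_of_im_ne_zero (t : ℝ) (hz : z.im ≠ 0) : (t : ℂ) - z ≠ 0 :=
  norm_pos_iff.1 ((abs_pos.2 hz).trans_le (abs_im_le_norm_ofReal_sub t z))

lemma continuous_inv_ofReal_sub (hz : z.im ≠ 0) : Continuous fun t : ℝ => ((t : ℂ) - z)⁻¹ :=
  (continuous_ofReal.sub continuous_const).inv₀ fun t => ofReal_sub_ne_zero_of_im_ne_zero t hz

lemma aestronglyMeasurable_div_ofReal_sub {μ : Measure ℝ} (hG : AEStronglyMeasurable G μ)
    (z : ℂ) : AEStronglyMeasurable (fun t => G t / ((t : ℂ) - z)) μ :=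
  (hG.mul (by fun_prop : Measurable fun t : ℝ => ((t : ℂ) - z)⁻¹).aestronglyMeasurable).congr
    (ae_of_all _ fun t => (div_eq_mul_inv _ _).symm)

lemma integrable_div_ofReal_sub (hG : Integrable G) (hz : z.im ≠ 0) :
    Integrable fun t => G t / ((t : ℂ) - z) := by
  refine (hG.norm.div_const |z.im|).mono' (aestronglyMeasurable_div_ofReal_sub hG.1 z)
    (ae_of_all _ fun t => ?_)
  rw [norm_div]
  gcongr
  exact abs_im_le_norm_ofReal_sub t z

lemma integral_inv_ofReal_sub (a b : ℝ) (hz : z.im ≠ 0) :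
    ∫ t in a..b, ((t : ℂ) - z)⁻¹ = log (b - z) - log (a - z) := by
  refine intervalIntegral.integral_eq_sub_of_hasDerivAt (f := fun u : ℝ => log ((u : ℂ) - z))
    (fun t _ => ?_)
    ((continuous_inv_ofReal_sub hz).intervalIntegrable a b)
  have hslit : (t : ℂ) - z ∈ slitPlane := mem_slitPlane_iff.2 (Or.inr (by simpa using hz))
  simpa using (((hasDerivAt_id (t : ℂ)).sub_const z).clog hslit).comp_ofReal

lemma cauchyTransform_eq_add (hG : Integrable G) (hz : z.im ≠ 0) {a b : ℝ} (hab : a ≤ b)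
    (w : ℂ) :
    cauchyTransform G z = (∫ t in (Ioc a b)ᶜ, G t / ((t : ℂ) - z)) +
      (∫ t in Ioc a b, (G t - w) / ((t : ℂ) - z)) + w * (log (b - z) - log (a - z)) := by
  have hGz := integrable_div_ofReal_sub hG hz
  have hinv : IntegrableOn (fun t : ℝ => ((t : ℂ) - z)⁻¹) (Ioc a b) :=
    (continuous_inv_ofReal_sub hz).integrableOn_Ioc
  have hnear : ∫ t in Ioc a b, (G t - w) / ((t : ℂ) - z) =
      (∫ t in Ioc a b, G t / ((t : ℂ) - z)) - w * ∫ t in Ioc a b, ((t : ℂ) - z)⁻¹ := by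
    rw [← integral_const_mul, ← integral_sub hGz.integrableOn (hinv.const_mul w)]
    refine setIntegral_congr_fun measurableSet_Ioc fun t _ => ?_
    simp only [div_eq_mul_inv]
    ring
  have hlog := integral_inv_ofReal_sub a b hz
  rw [intervalIntegral.integral_of_le hab] at hlog
  rw [hnear, hlog, cauchyTransform, ← integral_add_compl measurableSet_Ioc hGz]
  ring

lemma continuousAt_setIntegral_div_ofReal_sub_add_mul_I {S : Set ℝ} {x₀ δ : ℝ}
    (hG : IntegrableOn G S) (hS : MeasurableSet S) (hδ : 0 < δ)
    (hSδ : ∀ t ∈ S, δ ≤ |t - x₀|) :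
    ContinuousAt (fun y : ℝ => ∫ t in S, G t / ((t : ℂ) - (x₀ + y * I))) 0 := by
  have hδle (t : ℝ) (ht : t ∈ S) (y : ℝ) : δ ≤ ‖(t : ℂ) - (x₀ + y * I)‖ :=
    (hSδ t ht).trans (abs_sub_le_norm_ofReal_sub_add_mul_I t x₀ y)
  refine continuousAt_of_dominated (bound := fun t => ‖G t‖ / δ)
    (Eventually.of_forall fun y => aestronglyMeasurable_div_ofReal_sub hG.1 _)
    (Eventually.of_forall fun y => ae_restrict_of_forall_mem hS fun t ht => ?_)
    (hG.norm.div_const δ) (ae_restrict_of_forall_mem hS fun t ht => ?_)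
  · rw [norm_div]
    gcongr
    exact hδle t ht y
  · have hne : (t : ℂ) - (x₀ + (0 : ℝ) * I) ≠ 0 := norm_pos_iff.1 (hδ.trans_le (hδle t ht 0))
    exact continuousAt_const.div (by fun_prop) hne

lemma continuousAt_setIntegral_sub_div_ofReal_sub_add_mul_I {S : Set ℝ} {x₀ L : ℝ}
    (hG : AEStronglyMeasurable G (volume.restrict S)) (hS : MeasurableSet S)
    (hSfin : volume S ≠ ⊤) (hL : ∀ t ∈ S, ‖G t - G x₀‖ ≤ L * |t - x₀|) :
    ContinuousAt (fun y : ℝ => ∫ t in S, (G t - G x₀) / ((t : ℂ) - (x₀ + y * I))) 0 := by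
  have hS' : ∀ᵐ t ∂volume.restrict S, t ∈ S ∧ t ≠ x₀ :=
    (ae_restrict_mem hS).and (ae_restrict_of_ae (Measure.ae_ne volume x₀))
  refine continuousAt_of_dominated (bound := fun _ => L)
    (Eventually.of_forall fun y =>
      aestronglyMeasurable_div_ofReal_sub (hG.sub aestronglyMeasurable_const) _)
    (Eventually.of_forall fun y => hS'.mono fun t ⟨ht, htx⟩ => ?_)
    (integrableOn_const hSfin) (hS'.mono fun t ⟨_, htx⟩ => ?_)
  · have hpos : 0 < |t - x₀| := abs_pos.2 (sub_ne_zero.2 htx)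
    calc ‖(G t - G x₀) / ((t : ℂ) - (x₀ + y * I))‖
        ≤ L * |t - x₀| / |t - x₀| := by
          rw [norm_div]
          gcongr
          exacts [(norm_nonneg _).trans (hL t ht), hL t ht,
            abs_sub_le_norm_ofReal_sub_add_mul_I t x₀ y]
      _ = L := mul_div_cancel_right₀ L hpos.ne'
  · have hne : (t : ℂ) - (x₀ + (0 : ℝ) * I) ≠ 0 := by
      simpa [sub_eq_zero] using htx
    exact continuousAt_const.div (by fun_prop) hne

lemma tendsto_log_sub_log_sub_mul_I {δ : ℝ} (hδ : 0 < δ) :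
    Tendsto (fun ε : ℝ => log (δ - ε * I) - log (-δ - ε * I)) (𝓝[>] 0) (𝓝 (π * I)) := by
  have hright : Tendsto (fun ε : ℝ => log (δ - ε * I)) (𝓝[>] 0) (𝓝 (Real.log δ)) := by
    rw [ofReal_log hδ.le]
    refine (continuousAt_clog (ofReal_mem_slitPlane.2 hδ)).tendsto.comp ?_
    exact ((by fun_prop : Continuous fun ε : ℝ => (δ : ℂ) - ε * I).tendsto' 0 _ (by simp)).mono_left
      nhdsWithin_le_nhds
  have hleft : Tendsto (fun ε : ℝ => -(δ : ℂ) - ε * I) (𝓝[>] 0) (𝓝[{w | w.im < 0}] (-δ)) := by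
    refine tendsto_nhdsWithin_iff.2 ⟨?_, eventually_nhdsWithin_of_forall fun ε hε => ?_⟩
    · exact ((by fun_prop : Continuous fun ε : ℝ => -(δ : ℂ) - ε * I).tendsto' 0 _
        (by simp)).mono_left nhdsWithin_le_nhds
    · simpa using hε
  have := hright.sub ((tendsto_log_nhdsWithin_im_neg_of_re_neg_of_im_zero
    (by simpa using hδ) (by simp)).comp hleft)
  rwa [norm_neg, norm_real, Real.norm_of_nonneg hδ.le, sub_sub_cancel] at this

lemma tendsto_log_sub_log_add_mul_I {δ : ℝ} (hδ : 0 < δ) :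
    Tendsto (fun ε : ℝ => log (δ + ε * I) - log (-δ + ε * I)) (𝓝[>] 0) (𝓝 (-(π * I))) := by
  have hright : Tendsto (fun ε : ℝ => log (δ + ε * I)) (𝓝[>] 0) (𝓝 (Real.log δ)) := by
    rw [ofReal_log hδ.le]
    refine (continuousAt_clog (ofReal_mem_slitPlane.2 hδ)).tendsto.comp ?_
    exact ((by fun_prop : Continuous fun ε : ℝ => (δ : ℂ) + ε * I).tendsto' 0 _ (by simp)).mono_left
      nhdsWithin_le_nhds
  have hleft : Tendsto (fun ε : ℝ => -(δ : ℂ) + ε * I) (𝓝[>] 0) (𝓝[{w | 0 ≤ w.im}] (-δ)) := by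
    refine tendsto_nhdsWithin_iff.2 ⟨?_, eventually_nhdsWithin_of_forall fun ε hε => ?_⟩
    · exact ((by fun_prop : Continuous fun ε : ℝ => -(δ : ℂ) + ε * I).tendsto' 0 _
        (by simp)).mono_left nhdsWithin_le_nhds
    · simpa using le_of_lt hε
  have := hright.sub ((tendsto_log_nhdsWithin_im_nonneg_of_re_neg_of_im_zero
    (by simpa using hδ) (by simp)).comp hleft)
  rwa [norm_neg, norm_real, Real.norm_of_nonneg hδ.le, sub_add_cancel_left] at this

theorem exists_tendsto_cauchyTransform {G : ℝ → ℂ} {x₀ : ℝ} (hG : Integrable G)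
    (hG₀ : (fun t => G t - G x₀) =O[𝓝 x₀] fun t => t - x₀) :
    ∃ P : ℂ,
      Tendsto (fun ε : ℝ => cauchyTransform G (x₀ + ε * I)) (𝓝[>] 0) (𝓝 (P + π * I * G x₀)) ∧
      Tendsto (fun ε : ℝ => cauchyTransform G (x₀ - ε * I)) (𝓝[>] 0) (𝓝 (P - π * I * G x₀)) := by
  obtain ⟨L, hL⟩ := hG₀.bound
  obtain ⟨δ, hδ, hLδ⟩ := Metric.nhds_basis_closedBall.eventually_iff.1 hL
  set S := Ioc (x₀ - δ) (x₀ + δ)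
  set Q : ℝ → ℂ := fun y => (∫ t in Sᶜ, G t / ((t : ℂ) - (x₀ + y * I))) +
    ∫ t in S, (G t - G x₀) / ((t : ℂ) - (x₀ + y * I))
  have hQ : ContinuousAt Q 0 := by
    refine (continuousAt_setIntegral_div_ofReal_sub_add_mul_I hG.integrableOn
      measurableSet_Ioc.compl hδ fun t ht => ?_).add
      (continuousAt_setIntegral_sub_div_ofReal_sub_add_mul_I (L := L) hG.1.restrict
        measurableSet_Ioc measure_Ioc_lt_top.ne fun t ht => ?_)
    · simp only [mem_compl_iff, mem_Ioc, not_and_or, not_lt, not_le] at ht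
      exact le_abs'.2 (ht.imp (fun h => by linarith) fun h => by linarith)
    · have hball : t ∈ Metric.closedBall x₀ δ := by
        rw [Real.closedBall_eq_Icc]; exact Ioc_subset_Icc_self ht
      simpa [Real.norm_eq_abs] using hLδ hball
  have hdecomp (y : ℝ) (hy : y ≠ 0) : cauchyTransform G (x₀ + y * I) =
      Q y + G x₀ * (log (δ - y * I) - log (-δ - y * I)) := by
    have hb : ((x₀ + δ : ℝ) : ℂ) - (x₀ + y * I) = δ - y * I := by push_cast; ring
    have ha : ((x₀ - δ : ℝ) : ℂ) - (x₀ + y * I) = -δ - y * I := by push_cast; ring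
    rw [cauchyTransform_eq_add hG (by simpa using hy) (by linarith : x₀ - δ ≤ x₀ + δ) (G x₀),
      hb, ha]
  refine ⟨Q 0, ?_, ?_⟩
  · rw [show Q 0 + π * I * G x₀ = Q 0 + G x₀ * (π * I) by ring]
    exact ((hQ.tendsto.mono_left nhdsWithin_le_nhds).add
      (tendsto_const_nhds.mul (tendsto_log_sub_log_sub_mul_I hδ))).congr'
      (eventually_nhdsWithin_of_forall fun ε hε => (hdecomp ε hε.ne').symm)
  · rw [show Q 0 - π * I * G x₀ = Q 0 + G x₀ * -(π * I) by ring]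
    refine ((hQ.tendsto.comp ((continuous_neg.tendsto' 0 0 neg_zero).mono_left
      nhdsWithin_le_nhds)).add
      (tendsto_const_nhds.mul (tendsto_log_sub_log_add_mul_I hδ))).congr'
      (eventually_nhdsWithin_of_forall fun ε hε => ?_)
    have := hdecomp (-ε) (neg_ne_zero.2 (ne_of_gt hε))
    push_cast at this
    simp only [neg_mul, ← sub_eq_add_neg, sub_neg_eq_add] at this
    exact this.symm

end CauchyTransform

lemma neg_one_pow_succ_mul_zpow_neg {t : ℝ} (ht : t < 0) (k : ℕ) :
    (-1 : ℝ) ^ (k + 1) * t ^ (-(k : ℤ)) = -(|t| ^ k)⁻¹ := by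
  have h : t = -|t| := by rw [abs_of_neg ht, neg_neg]
  have hsq : (-1 : ℝ) ^ k * (-1) ^ k = 1 := by rw [← mul_pow]; norm_num
  rw [zpow_neg, zpow_natCast, h, neg_pow |t|, abs_neg, abs_abs, mul_inv, ← inv_pow (-1 : ℝ),
    inv_neg, inv_one, pow_succ]
  linear_combination (-(|t| ^ k)⁻¹) * hsq

noncomputable def cutWeight (k : ℕ) (α lam t : ℝ) : ℝ :=
  |t| ^ α * Real.exp t * Real.exp (-(2 * lam ^ (2 * k) / |t| ^ k))

section CutWeight

variable {k : ℕ} {α lam : ℝ}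

lemma fFun_integrand_eq {t : ℝ} (ht : t < 0) :
    ((|t| ^ α : ℝ) : ℂ) * exp t *
      exp (2 * (-1 : ℂ) ^ (k + 1) * ((lam ^ (2 * k) : ℝ) : ℂ) * (t : ℂ) ^ (-(k : ℤ))) =
      (cutWeight k α lam t : ℂ) := by
  have h : 2 * (-1 : ℂ) ^ (k + 1) * ((lam ^ (2 * k) : ℝ) : ℂ) * (t : ℂ) ^ (-(k : ℤ)) =
      ((2 * lam ^ (2 * k) * ((-1 : ℝ) ^ (k + 1) * t ^ (-(k : ℤ))) : ℝ) : ℂ) := by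
    push_cast
    ring
  rw [h, neg_one_pow_succ_mul_zpow_neg ht, cutWeight]
  push_cast
  ring_nf

lemma integrableOn_abs_rpow_mul_exp_Iio (hα : -1 < α) :
    IntegrableOn (fun t => |t| ^ α * Real.exp t) (Iio 0) := by
  rw [← (Measure.measurePreserving_neg (volume : Measure ℝ)).integrableOn_comp_preimage
    (Homeomorph.neg ℝ).measurableEmbedding]
  simp only [Function.comp_def, neg_preimage, neg_Iio, neg_zero, abs_neg]
  refine (Real.GammaIntegral_convergent (by linarith : 0 < α + 1)).congr_fun
    (fun u hu => ?_) measurableSet_Ioi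
  rw [abs_of_pos hu, add_sub_cancel_right, mul_comm]

lemma integrableOn_cutWeight (hα : -1 < α) {c : ℝ} (hc : c ≤ 0) :
    IntegrableOn (cutWeight k α lam) (Iio c) := by
  have hlam : 0 ≤ lam ^ (2 * k) := (even_two_mul k).pow_nonneg lam
  refine ((integrableOn_abs_rpow_mul_exp_Iio hα).mono_set (Iio_subset_Iio hc)).mono'
    (by unfold cutWeight; fun_prop) (ae_of_all _ fun t => ?_)
  have hexp : Real.exp (-(2 * lam ^ (2 * k) / |t| ^ k)) ≤ 1 :=
    Real.exp_le_one_iff.2 (neg_nonpos.2 (by positivity))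
  rw [Real.norm_of_nonneg (by unfold cutWeight; positivity), cutWeight]
  exact mul_le_of_le_one_right (by positivity) hexp

lemma differentiableAt_cutWeight {x : ℝ} (hx : x ≠ 0) :
    DifferentiableAt ℝ (cutWeight k α lam) x := by
  have := differentiableAt_abs hx
  unfold cutWeight
  fun_prop (disch := simp [hx])

lemma exp_neg_mul_cutWeight (x : ℝ) :
    Real.exp (-x) * cutWeight k α lam x =
      |x| ^ α * Real.exp (-(2 * lam ^ (2 * k) / |x| ^ k)) := by
  rw [cutWeight, Real.exp_neg]
  field_simp

lemma fFun_eq_mul_cauchyTransform {s : ℝ} (hs : 0 ≤ s) (z : ℂ) :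
    fFun k α s lam z = exp (-z) / (2 * π * I) *
      cauchyTransform ((Iio (-(lam ^ 2 * s))).indicator fun t => (cutWeight k α lam t : ℂ)) z := by
  have hc : -(lam ^ 2 * s) ≤ 0 := neg_nonpos.2 (by positivity)
  rw [fFun, cauchyTransform, integral_Iic_eq_integral_Iio, ← integral_indicator measurableSet_Iio]
  congr 2 with t
  by_cases ht : t ∈ Iio (-(lam ^ 2 * s))
  · simp only [indicator_of_mem ht, fFun_integrand_eq (ht.trans_le hc)]
  · simp [indicator_of_notMem ht]

end CutWeight

theorem fFun_jump_across_cut_general (k : ℕ) (α s : ℝ)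
    (hα : -1 < α) (hs : 0 < s) (lam : ℝ) :
    ∀ x : ℝ, x < -(lam ^ 2 * s) →
      ∃ fp fm : ℂ,
        Tendsto (fun ε : ℝ => fFun k α s lam ((x : ℂ) + ε * Complex.I))
          (𝓝[>] (0 : ℝ)) (𝓝 fp) ∧
        Tendsto (fun ε : ℝ => fFun k α s lam ((x : ℂ) - ε * Complex.I))
          (𝓝[>] (0 : ℝ)) (𝓝 fm) ∧
        fp - fm = (((|x| ^ α * Real.exp (-(2 * lam ^ (2 * k) / |x| ^ k)) : ℝ)) : ℂ) := by
  intro x hx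
  have hc : -(lam ^ 2 * s) ≤ 0 := neg_nonpos.2 (by positivity)
  have hf := fFun_eq_mul_cauchyTransform (k := k) (α := α) (lam := lam) hs.le
  set G := (Iio (-(lam ^ 2 * s))).indicator fun t => (cutWeight k α lam t : ℂ)
  have hG : Integrable G :=
    (integrable_indicator_iff measurableSet_Iio).2 (integrableOn_cutWeight hα hc).ofReal
  have hGx : G =ᶠ[𝓝 x] fun t => (cutWeight k α lam t : ℂ) :=
    eventually_of_mem (Iio_mem_nhds hx) fun t ht => indicator_of_mem ht _
  have hGdiff : DifferentiableAt ℝ G x :=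
    (differentiableAt_cutWeight (hx.trans_le hc).ne).hasDerivAt.ofReal_comp.differentiableAt
      |>.congr_of_eventuallyEq hGx
  obtain ⟨P, hplus, hminus⟩ := exists_tendsto_cauchyTransform hG hGdiff.isBigO_sub
  have hexp (σ : ℂ) : Tendsto (fun ε : ℝ => exp (-(x + σ * ε * I)) / (2 * π * I)) (𝓝[>] 0)
      (𝓝 (exp (-x) / (2 * π * I))) :=
    ((by fun_prop : Continuous fun ε : ℝ => exp (-(x + σ * ε * I)) / (2 * π * I)).tendsto' 0 _
      (by simp)).mono_left nhdsWithin_le_nhds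
  refine ⟨_, _, ((hexp 1).mul hplus).congr fun ε => ?_,
    ((hexp (-1)).mul hminus).congr fun ε => ?_, ?_⟩
  · rw [hf]; ring_nf
  · rw [hf]; ring_nf
  · rw [hGx.eq_of_nhds, ← ofReal_neg, ← ofReal_exp]
    calc _ = ((Real.exp (-x) * cutWeight k α lam x : ℝ) : ℂ) := by
          push_cast
          field_simp
          ring
      _ = _ := by rw [exp_neg_mul_cutWeight]

/-- Jump relation of `f(·;λ)` across its cut `(−∞, −λ²s)`:
`f₊(x) − f₋(x) = |x|^α e^{−2λ^{2k}/|x|^k}`. -/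
theorem fFun_jump_across_cut (k : ℕ) (hk : 1 ≤ k) (α s : ℝ)
    (hα : -1 < α) (hs : 0 < s) (lam : ℝ) (hlam : 0 < lam) :
    ∀ x : ℝ, x < -(lam ^ 2 * s) →
      ∃ fp fm : ℂ,
        Tendsto (fun ε : ℝ => fFun k α s lam ((x : ℂ) + ε * Complex.I))
          (𝓝[>] (0 : ℝ)) (𝓝 fp) ∧
        Tendsto (fun ε : ℝ => fFun k α s lam ((x : ℂ) - ε * Complex.I))
          (𝓝[>] (0 : ℝ)) (𝓝 fm) ∧
        fp - fm = (((|x| ^ α * Real.exp (-(2 * lam ^ (2 * k) / |x| ^ k)) : ℝ)) : ℂ) :=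
  fFun_jump_across_cut_general k α s hα hs lam
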